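/- arXiv:2503.01026 — 2 statements merged into one kernel-verified Lean document; each statement's English description precedes it below -/
import Mathlib

section
/- The only nonempty palindromic factors of the Narayana word n are 0, 1, 2, 00, 010, and 101. -/
def nu : Fin 3 → List (Fin 3) := fun a => if a = 0 then [0, 1] else if a = 1 then [2] else [0]

def nuPow (k : ℕ) : List (Fin 3) := (fun w => w.flatMap nu)^[k] [0]


def nword (i : ℕ) : Fin 3 := (nuPow (i+2)).getD i 0


def IsFactor (x : List (Fin 3)) : Prop :=
  ∃ i, x = (List.range x.length).map (fun k => nword (i + k))

/-!
Peeling the outer letters off a palindromic factor leaves a palindromic factor, so a palindromic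
factor of length at least 4 would produce one of length 4 or 5. The factors of length at most 5
are found by a finite closure computation: since every letter has a nonempty image, each factor
of `ν(w)` lies in the image of a factor of `w` that is no longer than itself. None of them of
length 4 or 5 is a palindrome.
-/

open List

namespace List

variable {α β : Type*} {f : α → List β}

theorem length_le_length_flatMap (hf : ∀ a, f a ≠ []) (w : List α) :
    w.length ≤ (w.flatMap f).length := by
  induction w with
  | nil => simp
  | cons a w ih =>
    have := length_pos_iff.mpr (hf a)
    simp only [flatMap_cons, length_append, length_cons]
    omega

theorem IsPrefix.flatMap_take (hf : ∀ a, f a ≠ []) {v : List β} {w : List α}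
    (h : v <+: w.flatMap f) : v <+: (w.take v.length).flatMap f := by
  have hpre : (w.take v.length).flatMap f <+: w.flatMap f := by
    conv_rhs => rw [← take_append_drop v.length w, flatMap_append]
    exact prefix_append _ _
  refine prefix_of_prefix_length_le h hpre ?_
  rcases le_total v.length w.length with hle | hle
  · calc v.length = (w.take v.length).length := by simp [hle]
      _ ≤ _ := length_le_length_flatMap hf _
  · rw [take_of_length_le hle]
    exact h.length_le

theorem IsInfix.exists_infix_of_flatMap (hf : ∀ a, f a ≠ []) {v : List β} {w : List α}
    (h : v <:+: w.flatMap f) : ∃ u, u <:+: w ∧ u.length ≤ v.length ∧ v <:+: u.flatMap f := by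
  induction w generalizing v with
  | nil => exact ⟨[], infix_rfl, by simp, h⟩
  | cons a w ih =>
    rcases eq_or_ne v [] with rfl | hv
    · exact ⟨[], nil_infix, le_rfl, infix_rfl⟩
    rw [flatMap_cons, infix_append_iff_ne_nil] at h
    rcases h with h | h | ⟨r, p, hr, -, rfl, hrs, hpp⟩
    · refine ⟨[a], (singleton_prefix_cons_iff.mpr rfl).isInfix, ?_, by simpa using h⟩
      simpa [Nat.one_le_iff_ne_zero] using hv
    · obtain ⟨u, hu, hlen, hvu⟩ := ih h
      exact ⟨u, hu.trans (suffix_cons a w).isInfix, hlen, hvu⟩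
    · refine ⟨a :: w.take p.length, (cons_prefix_cons.mpr ⟨rfl, take_prefix _ _⟩).isInfix,
        ?_, ?_⟩
      · have := length_pos_iff.mpr hr
        simp only [length_cons, length_append, length_take]
        omega
      · rw [flatMap_cons]
        exact infix_append_iff.mpr (Or.inr (Or.inr ⟨r, p, rfl, hrs, hpp.flatMap_take hf⟩))

end List

theorem nuPow_succ (k : ℕ) : nuPow (k + 1) = (nuPow k).flatMap nu :=
  Function.iterate_succ_apply' _ _ _

theorem nuPow_prefix_succ (k : ℕ) : nuPow k <+: nuPow (k + 1) := by
  induction k with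
  | zero => exact ⟨[1], rfl⟩
  | succ k ih =>
    obtain ⟨t, ht⟩ := ih
    exact ⟨t.flatMap nu, by rw [nuPow_succ, nuPow_succ (k + 1), ← ht, flatMap_append]⟩

theorem nuPow_prefix_of_le {k m : ℕ} (h : k ≤ m) : nuPow k <+: nuPow m := by
  induction h with
  | refl => exact prefix_rfl
  | step _ ih => exact ih.trans (nuPow_prefix_succ _)

theorem lt_length_nuPow (k : ℕ) : k < (nuPow k).length := by
  induction k with
  | zero => simp [nuPow]
  | succ k ih =>
    obtain ⟨t, ht⟩ := nuPow_prefix_of_le (Nat.zero_le k)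
    have hk : nuPow (k + 1) = 0 :: 1 :: t.flatMap nu := by rw [nuPow_succ, ← ht]; rfl
    have ih' : k < t.length + 1 := by rwa [← ht] at ih
    have := length_le_length_flatMap (f := nu) (by decide) t
    rw [hk, length_cons, length_cons]
    omega

theorem nword_eq_getElem {i k : ℕ} (h : i < (nuPow k).length) : nword i = (nuPow k)[i] := by
  have h' : i < (nuPow (i + 2)).length := (lt_length_nuPow _).trans' (by omega)
  rw [nword, getD_eq_getElem _ _ h']
  rcases le_total k (i + 2) with hk | hk
  · exact ((nuPow_prefix_of_le hk).getElem h).symm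
  · exact (nuPow_prefix_of_le hk).getElem h'

theorem isFactor_iff {x : List (Fin 3)} : IsFactor x ↔ ∃ k, x <:+: nuPow k := by
  constructor
  · rintro ⟨i, hx⟩
    refine ⟨i + x.length, ?_⟩
    have hlen := lt_length_nuPow (i + x.length)
    generalize hm : i + x.length = m at hlen ⊢
    have : x = ((nuPow m).drop i).take x.length := by
      refine ext_getElem (by simp; omega) fun j hj _ => ?_
      simp [getElem_of_eq hx hj, nword_eq_getElem (k := m) (by omega : i + j < _)]
    rw [this]
    exact (take_prefix _ _).isInfix.trans (drop_suffix _ _).isInfix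
  · rintro ⟨k, s, t, h⟩
    refine ⟨s.length, ext_getElem (by simp) fun j hj _ => ?_⟩
    have hj' : s.length + j < (nuPow k).length := by rw [← h]; simp; omega
    simp [nword_eq_getElem hj', ← h, getElem_append_right, getElem_append_left hj]

theorem IsFactor.of_infix {x y : List (Fin 3)} (hx : IsFactor x) (h : y <:+: x) : IsFactor y :=
  have ⟨k, hk⟩ := isFactor_iff.mp hx
  isFactor_iff.mpr ⟨k, h.trans hk⟩

def shortFactors : List (List (Fin 3)) := [[],
  [0], [1], [2],
  [0, 0], [0, 1], [1, 0], [1, 2], [2, 0],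
  [0, 0, 1], [0, 1, 0], [0, 1, 2], [1, 0, 1], [1, 2, 0], [2, 0, 0], [2, 0, 1],
  [0, 0, 1, 0], [0, 0, 1, 2], [0, 1, 0, 1], [0, 1, 2, 0], [1, 0, 1, 2], [1, 2, 0, 0],
  [1, 2, 0, 1], [2, 0, 0, 1], [2, 0, 1, 2],
  [0, 0, 1, 0, 1], [0, 0, 1, 2, 0], [0, 1, 0, 1, 2], [0, 1, 2, 0, 0], [0, 1, 2, 0, 1],
  [1, 0, 1, 2, 0], [1, 2, 0, 0, 1], [1, 2, 0, 1, 2], [2, 0, 0, 1, 0], [2, 0, 0, 1, 2],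
  [2, 0, 1, 2, 0]]

theorem mem_shortFactors_of_infix_flatMap_nu {u v : List (Fin 3)} (hu : u ∈ shortFactors)
    (hv : v <:+: u.flatMap nu) (hlen : v.length ≤ 5) : v ∈ shortFactors := by
  have hclosed : ∀ u ∈ shortFactors, ∀ t ∈ (u.flatMap nu).tails, ∀ v ∈ t.inits,
      v.length ≤ 5 → v ∈ shortFactors := by decide
  obtain ⟨t, hvt, htu⟩ := infix_iff_prefix_suffix.mp hv
  exact hclosed u hu t ((mem_tails _ _).mpr htu) v ((mem_inits _ _).mpr hvt) hlen

theorem mem_shortFactors_of_infix_nuPow {k : ℕ} {v : List (Fin 3)} (hv : v <:+: nuPow k)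
    (hlen : v.length ≤ 5) : v ∈ shortFactors := by
  induction k generalizing v with
  | zero =>
    rcases (infix_singleton_iff v 0).mp hv with rfl | rfl <;> decide
  | succ k ih =>
    rw [nuPow_succ] at hv
    obtain ⟨u, hu, hul, hvu⟩ := hv.exists_infix_of_flatMap (by decide)
    exact mem_shortFactors_of_infix_flatMap_nu (ih hu (hul.trans hlen)) hvu hlen

theorem IsFactor.mem_shortFactors {x : List (Fin 3)} (hx : IsFactor x) (hlen : x.length ≤ 5) :
    x ∈ shortFactors :=
  have ⟨_, hk⟩ := isFactor_iff.mp hx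
  mem_shortFactors_of_infix_nuPow hk hlen

theorem length_le_three_of_mem_shortFactors_of_reverse_eq :
    ∀ v ∈ shortFactors, v.reverse = v → v.length ≤ 3 := by
  decide

theorem IsFactor.length_le_three_of_palindrome {x : List (Fin 3)} (hp : Palindrome x)
    (hx : IsFactor x) : x.length ≤ 3 := by
  induction hp with
  | nil => simp
  | singleton => simp
  | @cons_concat a l hl ih =>
    have hl3 := ih (hx.of_infix (infix_append' [a] l [a]))
    refine length_le_three_of_mem_shortFactors_of_reverse_eq _ (hx.mem_shortFactors ?_)
      (hl.cons_concat a).reverse_eq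
    simp only [length_cons, length_append, length_nil]
    omega

theorem narayana_palindromes (x : List (Fin 3)) :
    (x ≠ [] ∧ IsFactor x ∧ x.reverse = x) ↔
      x ∈ ([[0], [1], [2], [0, 0], [0, 1, 0], [1, 0, 1]] : List (List (Fin 3))) := by
  have classify : ∀ v ∈ shortFactors, v ≠ [] → v.reverse = v →
      v ∈ ([[0], [1], [2], [0, 0], [0, 1, 0], [1, 0, 1]] : List (List (Fin 3))) := by
    decide
  have occur : ∀ v ∈ ([[0], [1], [2], [0, 0], [0, 1, 0], [1, 0, 1]] : List (List (Fin 3))),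
      v ≠ [] ∧ v <:+: nuPow 5 ∧ v.reverse = v := by
    decide
  constructor
  · rintro ⟨hne, hx, hrev⟩
    have := hx.length_le_three_of_palindrome (Palindrome.of_reverse_eq hrev)
    exact classify x (hx.mem_shortFactors (by omega)) hne hrev
  · intro hx
    obtain ⟨hne, hinf, hrev⟩ := occur x hx
    exact ⟨hne, isFactor_iff.mpr ⟨5, hinf⟩, hrev⟩
end

section
/- For all j ≥ 1, the sequences a and b satisfy: (i) b(j) = a(a(a(j))) + 1; (ii) b(j) = a(a(j)) + j; (iii) b(a(j)) = a(a(a(j))) + a(j); (iv) a(b(j)) = a(j) + b(j); (v) b(a(j)) = a(j) + b(j) − 1. -/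
/-!
Let `F` be a Narayana representation of `j - 1` and write `S k = ∑ f ∈ F, nara (f + k)`.
Shifting every index of a representation by `k` gives again a representation, of `S k`; hence
`a (S l + 1) = S (l + 1) + 1` and `b (S l + 1) = S (l + 3) + 2`, so that `a j, a (a j), a (a (a j))`
are `S 1 + 1, S 2 + 1, S 3 + 1`, while `b j = S 3 + 2` and `b (a j) = S 4 + 2`. Adding the index `0` to
`F` shifted by `3` represents `S 3 + 1 = b j - 1`, which gives `a (b j) = nara 1 + S 4 + 1`.
The five identities are then linear consequences of `S 3 = S 2 + S 0` and `S 4 = S 3 + S 1`.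
-/

def nara : ℕ → ℕ
  | 0 => 1
  | 1 => 2
  | 2 => 3
  | (i+3) => nara (i+2) + nara i


def NaraRep (F : Finset ℕ) (m : ℕ) : Prop :=
  (∑ f ∈ F, nara f) = m ∧ ∀ a ∈ F, ∀ b ∈ F, a < b → a + 3 ≤ b

open Finset

theorem nara_add_three (i : ℕ) : nara (i + 3) = nara (i + 2) + nara i := rfl

theorem nara_pos : ∀ i, 0 < nara i
  | 0 | 1 | 2 => by decide
  | i + 3 => by rw [nara_add_three]; have := nara_pos i; omega

theorem nara_lt_succ : ∀ i, nara i < nara (i + 1)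
  | 0 | 1 | 2 => by decide
  | i + 3 => by
    rw [show i + 3 + 1 = i + 1 + 3 from rfl, nara_add_three (i + 1)]
    exact Nat.lt_add_of_pos_right (nara_pos (i + 1))

theorem nara_strictMono : StrictMono nara := strictMono_nat_of_lt_succ nara_lt_succ

theorem nara_succ_le : ∀ n, nara (n + 1) ≤ nara n + nara (n - 2)
  | 0 | 1 | 2 => by decide
  | n + 3 => (nara_add_three (n + 1)).le

theorem NaraRep.insert {F : Finset ℕ} {m n : ℕ} (hF : NaraRep F m)
    (hn : ∀ f ∈ F, n + 3 ≤ f ∨ f + 3 ≤ n) : NaraRep (insert n F) (nara n + m) := by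
  have hnF : n ∉ F := fun h => by have := hn n h; omega
  refine ⟨by rw [sum_insert hnF, hF.1], ?_⟩
  intro x hx y hy hxy
  rw [mem_insert] at hx hy
  rcases hx with rfl | hx <;> rcases hy with rfl | hy
  · omega
  · have := hn y hy; omega
  · have := hn x hx; omega
  · exact hF.2 x hx y hy hxy

/-- Greedy construction: take the largest `nara (n - 1) ≤ m` and represent the remainder,
which is below `nara (n - 3)`. -/
theorem exists_naraRep_forall_lt (n : ℕ) :
    ∀ m < nara n, ∃ F, NaraRep F m ∧ ∀ f ∈ F, f < n := by
  induction n using Nat.strong_induction_on with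
  | _ n ih =>
  intro m hm
  rcases n with _ | n
  · exact ⟨∅, ⟨by simp_all [nara], by simp⟩, by simp⟩
  by_cases hlt : m < nara n
  · obtain ⟨F, hF, hFn⟩ := ih n n.lt_succ_self m hlt
    exact ⟨F, hF, fun f hf => (hFn f hf).trans n.lt_succ_self⟩
  · have hr : m - nara n < nara (n - 2) := by have := nara_succ_le n; omega
    obtain ⟨F, hF, hFn⟩ := ih (n - 2) (by omega) _ hr
    refine ⟨insert n F, ?_, ?_⟩
    · convert hF.insert (n := n) fun f hf => Or.inr (by have := hFn f hf; omega) using 1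
      omega
    · intro f hf
      rcases mem_insert.mp hf with rfl | hf
      · exact f.lt_succ_self
      · have := hFn f hf; omega

theorem exists_naraRep (m : ℕ) : ∃ F, NaraRep F m := by
  obtain ⟨F, hF, -⟩ := exists_naraRep_forall_lt (m + 1) m
    ((nara_strictMono.id_le m).trans_lt (nara_lt_succ m))
  exact ⟨F, hF⟩

/-- `naraShift F k` is the number whose Narayana representation is that of `∑ f ∈ F, nara f`
followed by `k` zeros. -/
def naraShift (F : Finset ℕ) (k : ℕ) : ℕ := ∑ f ∈ F, nara (f + k)

theorem naraShift_add_three (F : Finset ℕ) (k : ℕ) :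
    naraShift F (k + 3) = naraShift F (k + 2) + naraShift F k := by
  rw [naraShift, naraShift, naraShift, ← sum_add_distrib]
  exact sum_congr rfl fun f _ => nara_add_three (f + k)

theorem naraShift_map_addRightEmbedding (F : Finset ℕ) (l k : ℕ) :
    naraShift (F.map (addRightEmbedding l)) k = naraShift F (l + k) := by
  simp [naraShift, add_assoc]

theorem NaraRep.naraShift_zero {F : Finset ℕ} {m : ℕ} (hF : NaraRep F m) : naraShift F 0 = m := by
  simpa [naraShift] using hF.1

theorem NaraRep.map_addRightEmbedding {F : Finset ℕ} {m : ℕ} (hF : NaraRep F m) (k : ℕ) :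
    NaraRep (F.map (addRightEmbedding k)) (naraShift F k) := by
  refine ⟨by simp [naraShift], ?_⟩
  simp only [mem_map, addRightEmbedding_apply]
  rintro _ ⟨x, hx, rfl⟩ _ ⟨y, hy, rfl⟩ hxy
  have := hF.2 x hx y hy (by omega)
  omega

section ShiftedValues

variable {c : ℕ → ℕ} {k d : ℕ}
  (hc : ∀ j, 1 ≤ j → ∀ F, NaraRep F (j - 1) → c j = naraShift F k + d)
  {F : Finset ℕ} {m : ℕ} (hF : NaraRep F m)
include hc hF

theorem apply_naraShift_add_one (l : ℕ) : c (naraShift F l + 1) = naraShift F (l + k) + d := by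
  rw [hc _ (by omega) _ (by simpa using hF.map_addRightEmbedding l),
    naraShift_map_addRightEmbedding]

theorem apply_naraShift_three_add_two :
    c (naraShift F 3 + 2) = nara k + naraShift F (3 + k) + d := by
  have h0 : 0 ∉ F.map (addRightEmbedding 3) := by simp
  have hrep : NaraRep (insert 0 (F.map (addRightEmbedding 3))) (nara 0 + naraShift F 3) :=
    (hF.map_addRightEmbedding 3).insert (by simp)
  rw [hc _ (by omega) _ (by convert hrep using 1; simp [nara]; omega), naraShift, sum_insert h0,
    ← naraShift, naraShift_map_addRightEmbedding, zero_add]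

end ShiftedValues

theorem kimberling_moses_identities (a b : ℕ → ℕ)
    (ha : ∀ j : ℕ, 1 ≤ j → ∀ F : Finset ℕ, NaraRep F (j - 1) →
      a j = (∑ f ∈ F, nara (f + 1)) + 1)
    (hb : ∀ j : ℕ, 1 ≤ j → ∀ F : Finset ℕ, NaraRep F (j - 1) →
      b j = (∑ f ∈ F, nara (f + 3)) + 2) :
    ∀ j : ℕ, 1 ≤ j →
      b j = a (a (a j)) + 1 ∧
      b j = a (a j) + j ∧
      b (a j) = a (a (a j)) + a j ∧
      a (b j) = a j + b j ∧
      b (a j) + 1 = a j + b j := by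
  intro j hj
  obtain ⟨F, hF⟩ := exists_naraRep (j - 1)
  have hjF : j = naraShift F 0 + 1 := by rw [hF.naraShift_zero]; omega
  have a₀ : a (naraShift F 0 + 1) = naraShift F 1 + 1 := apply_naraShift_add_one ha hF 0
  have a₁ : a (naraShift F 1 + 1) = naraShift F 2 + 1 := apply_naraShift_add_one ha hF 1
  have a₂ : a (naraShift F 2 + 1) = naraShift F 3 + 1 := apply_naraShift_add_one ha hF 2
  have b₀ : b (naraShift F 0 + 1) = naraShift F 3 + 2 := apply_naraShift_add_one hb hF 0
  have b₁ : b (naraShift F 1 + 1) = naraShift F 4 + 2 := apply_naraShift_add_one hb hF 1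
  have ab : a (naraShift F 3 + 2) = 2 + naraShift F 4 + 1 := apply_naraShift_three_add_two ha hF
  have h₃ : naraShift F 3 = naraShift F 2 + naraShift F 0 := naraShift_add_three F 0
  have h₄ : naraShift F 4 = naraShift F 3 + naraShift F 1 := naraShift_add_three F 1
  rw [hjF, a₀, a₁, a₂, b₀, b₁, ab]
  omega
end
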